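/- Let U ⊆ ℝⁿ be open, equipped with the canonical block product for block sizes m_1,…,m_r, let Γ be a torsionless connection on U, and let X, Y be smooth vector fields on U; set A = X∘ and B = Y∘. Assume: (i) d_∇A = 0 on U; (ii) for all indices i, j, m: (d_∇B)^i_{js} A^s_m + (d_∇B)^i_{ms} A^s_j = 0 on U; (iii) at every point of U, X^{1(α)} ≠ X^{1(β)} for all α ≠ β in {1,…,r}, and X^{2(α)} ≠ 0 for every α with m_α ≥ 2. Then d_∇B = 0 on U. -/
import Mathlib


/-- Index set for block sizes `m 0, …, m (r-1)`: the coordinate `⟨α, j⟩` is the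
paper's `u^{(j+1)(α)}` (0-based `j`). -/
abbrev Idx (r : ℕ) (m : Fin r → ℕ) := Σ α : Fin r, Fin (m α)

/-- Partial derivative `∂_i f`. -/
noncomputable def pd {r : ℕ} {m : Fin r → ℕ} (i : Idx r m) (f : (Idx r m → ℝ) → ℝ) :
    (Idx r m → ℝ) → ℝ :=
  fun x => fderiv ℝ f x (Pi.single i 1)

/-- Structure constants of the canonical block product:
`c^{i(α)}_{j(β)k(γ)} = δ^α_β δ^α_γ δ^i_{j+k−1}` (0-based: `i = j + k`). -/
def cblock {r : ℕ} {m : Fin r → ℕ} (i j k : Idx r m) : ℝ :=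
  if i.1 = j.1 ∧ i.1 = k.1 ∧ i.2.val = j.2.val + k.2.val then 1 else 0

/-- The (1,1)-tensor `X∘` for the canonical block product. -/
noncomputable def Xc {r : ℕ} {m : Fin r → ℕ} (X : Idx r m → (Idx r m → ℝ) → ℝ)
    (i j : Idx r m) : (Idx r m → ℝ) → ℝ :=
  fun x => ∑ s, cblock i j s * X s x

/-- Covariant derivative `∇_j V^i_k` of a (1,1)-tensor `V` with respect to a
connection `Γ`. -/
noncomputable def covT {r : ℕ} {m : Fin r → ℕ}
    (Γ : Idx r m → Idx r m → Idx r m → (Idx r m → ℝ) → ℝ)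
    (V : Idx r m → Idx r m → (Idx r m → ℝ) → ℝ) (j i k : Idx r m) :
    (Idx r m → ℝ) → ℝ :=
  fun x => pd j (V i k) x + (∑ s, Γ i j s x * V s k x) - (∑ s, Γ s j k x * V i s x)

/-- lower triangular block-Toeplitz matrix built from coefficients `a`. -/
def AbT {r : ℕ} {m : Fin r → ℕ} (a : (α : Fin r) → Fin (m α) → ℝ) (j k : Idx r m) : ℝ :=
  if h : j.1 = k.1 ∧ k.2.val ≤ j.2.val then
    a j.1 ⟨j.2.val - k.2.val, lt_of_le_of_lt (Nat.sub_le _ _) j.2.isLt⟩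
  else 0

lemma Xc_eq {r : ℕ} {m : Fin r → ℕ} (X : Idx r m → (Idx r m → ℝ) → ℝ)
    (x : Idx r m → ℝ) (j k : Idx r m) :
    Xc X j k x = AbT (fun α p => X ⟨α, p⟩ x) j k := by
  unfold Xc AbT
  by_cases h : j.1 = k.1 ∧ k.2.val ≤ j.2.val
  · obtain ⟨h1, h2⟩ := h
    have hlt : j.2.val - k.2.val < m j.1 := lt_of_le_of_lt (Nat.sub_le _ _) j.2.isLt
    rw [dif_pos ⟨h1, h2⟩]
    rw [Finset.sum_eq_single (⟨j.1, ⟨j.2.val - k.2.val, hlt⟩⟩ : Idx r m)]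
    · have hc : cblock j k ⟨j.1, ⟨j.2.val - k.2.val, hlt⟩⟩ = 1 := by
        unfold cblock; rw [if_pos]; exact ⟨h1, rfl, by dsimp only; omega⟩
      rw [hc, one_mul]
    · rintro ⟨δ, ss⟩ _ hs
      have hc : cblock j k ⟨δ, ss⟩ = 0 := by
        unfold cblock; rw [if_neg]
        rintro ⟨e1, e2, e3⟩
        apply hs
        dsimp only at e2 e3
        subst e2
        have : ss = ⟨j.2.val - k.2.val, hlt⟩ := Fin.ext (by dsimp only; omega)
        rw [this]
      rw [hc, zero_mul]
    · intro h; exact absurd (Finset.mem_univ _) h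
  · rw [dif_neg h]
    apply Finset.sum_eq_zero
    rintro ⟨δ, ss⟩ _
    have hc : cblock j k ⟨δ, ss⟩ = 0 := by
      unfold cblock; rw [if_neg]
      rintro ⟨e1, e2, e3⟩
      dsimp only at e2 e3
      exact h ⟨e1, by omega⟩
    rw [hc, zero_mul]

lemma idx_ext {r : ℕ} {m : Fin r → ℕ} {s k : Idx r m} (h1 : s.1 = k.1)
    (h2 : s.2.val = k.2.val) : s = k := by
  obtain ⟨δ, ss⟩ := s; obtain ⟨ε, kk⟩ := k
  dsimp only at h1 h2
  subst h1
  exact congrArg _ (Fin.ext h2)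

lemma idx_mk_eq {r : ℕ} {m : Fin r → ℕ} {α : Fin r} {p q : Fin (m α)}
    (h : p.val = q.val) : (⟨α, p⟩ : Idx r m) = ⟨α, q⟩ :=
  congrArg _ (Fin.ext h)

lemma idx_mk_ne {r : ℕ} {m : Fin r → ℕ} {α : Fin r} {p q : Fin (m α)}
    (h : p.val ≠ q.val) : (⟨α, p⟩ : Idx r m) ≠ ⟨α, q⟩ :=
  fun he => h (congrArg (fun s : Idx r m => s.2.val) he)

lemma AbT_same {r : ℕ} {m : Fin r → ℕ} (a : (α : Fin r) → Fin (m α) → ℝ)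
    (α : Fin r) (p q : Fin (m α)) (h : q.val ≤ p.val) :
    AbT a ⟨α, p⟩ ⟨α, q⟩ =
      a α ⟨p.val - q.val, lt_of_le_of_lt (Nat.sub_le _ _) p.isLt⟩ := by
  unfold AbT
  rw [dif_pos ⟨rfl, h⟩]

lemma key {r : ℕ} {m : Fin r → ℕ} (hm : ∀ α, 1 ≤ m α)
    (a : (α : Fin r) → Fin (m α) → ℝ)
    (t : Idx r m → Idx r m → ℝ)
    (hanti : ∀ j k, t j k = - t k j)
    (heq : ∀ j l, (∑ s, t j s * AbT a s l) = ∑ s, AbT a s j * t s l)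
    (ha0 : ∀ α β : Fin r, α ≠ β → a α ⟨0, hm α⟩ ≠ a β ⟨0, hm β⟩)
    (ha1 : ∀ α : Fin r, ∀ h : 1 < m α, a α ⟨1, h⟩ ≠ 0) :
    ∀ j k, t j k = 0 := by
  suffices H : ∀ n : ℕ, ∀ j k : Idx r m,
      (m j.1 - 1 - j.2.val) + (m k.1 - 1 - k.2.val) < n → t j k = 0 by
    intro j k
    exact H _ j k (Nat.lt_succ_self _)
  intro n
  induction n with
  | zero => intro j k h; omega
  | succ n IH =>
    intro j k hn
    have kill : ∀ j' k' : Idx r m,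
        (m j'.1 - 1 - j'.2.val) + (m k'.1 - 1 - k'.2.val)
          < (m j.1 - 1 - j.2.val) + (m k.1 - 1 - k.2.val) → t j' k' = 0 := by
      intro j' k' h; exact IH j' k' (by (try simp only [Fin.val_mk]) <;> omega)
    by_cases hbg : j.1 = k.1
    · -- same block
      obtain ⟨α, jj⟩ := j
      obtain ⟨γ, kk⟩ := k
      dsimp only at hbg
      subst hbg
      clear hn
      have kill' : ∀ p q : Fin (m α), jj.val + kk.val < p.val + q.val →
          t ⟨α, p⟩ ⟨α, q⟩ = 0 := by
        intro p q h
        apply kill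
        have h1 := p.isLt; have h2 := q.isLt; have h3 := jj.isLt; have h4 := kk.isLt
        dsimp only
        omega
      have nbr : ∀ p q : ℕ, ∀ hp : p + 1 < m α, ∀ hq : q + 1 < m α,
          p + q + 1 = jj.val + kk.val →
          t ⟨α, ⟨p, by (try simp only [Fin.val_mk]) <;> omega⟩⟩ ⟨α, ⟨q + 1, hq⟩⟩
            = t ⟨α, ⟨p + 1, hp⟩⟩ ⟨α, ⟨q, by (try simp only [Fin.val_mk]) <;> omega⟩⟩ := by
        intro p q hp hq hsum
        have hpm : p < m α := by (try simp only [Fin.val_mk]) <;> omega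
        have hqm : q < m α := by (try simp only [Fin.val_mk]) <;> omega
        have he := heq ⟨α, ⟨p, hpm⟩⟩ ⟨α, ⟨q, hqm⟩⟩
        have hL : (∑ s, t ⟨α, ⟨p, hpm⟩⟩ s * AbT a s ⟨α, ⟨q, hqm⟩⟩)
            = t ⟨α, ⟨p, hpm⟩⟩ ⟨α, ⟨q, hqm⟩⟩ * a α ⟨0, hm α⟩
              + t ⟨α, ⟨p, hpm⟩⟩ ⟨α, ⟨q + 1, hq⟩⟩ * a α ⟨1, by (try simp only [Fin.val_mk]) <;> omega⟩ := by
          rw [← Finset.sum_subset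
            (Finset.subset_univ
              ({⟨α, ⟨q, hqm⟩⟩, ⟨α, ⟨q + 1, hq⟩⟩} : Finset (Idx r m))) ?_]
          · rw [Finset.sum_pair (idx_mk_ne (by (try simp only [Fin.val_mk]) <;> omega))]
            congr 1
            · congr 1
              rw [AbT_same a α _ _ (le_refl _)]
              congr 1
              exact Fin.ext (by (try simp only [Fin.val_mk]) <;> omega)
            · congr 1
              rw [AbT_same a α _ _ (by (try simp only [Fin.val_mk]) <;> omega)]
              congr 1
              exact Fin.ext (by (try simp only [Fin.val_mk]) <;> omega)
          · rintro ⟨δ, ss⟩ _ hs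
            by_cases hA : δ = α ∧ q ≤ ss.val
            · obtain ⟨h1, h2⟩ := hA
              subst h1
              have hne1 : ss.val ≠ q := fun h =>
                hs (by rw [Finset.mem_insert]; left; exact idx_mk_eq h)
              have hne2 : ss.val ≠ q + 1 := fun h =>
                hs (by rw [Finset.mem_insert, Finset.mem_singleton]
                       right; exact idx_mk_eq h)
              rw [kill' _ _ (by (try simp only [Fin.val_mk]) <;> omega), zero_mul]
            · have : AbT a ⟨δ, ss⟩ ⟨α, ⟨q, hqm⟩⟩ = 0 := by
                unfold AbT
                rw [dif_neg]
                intro hc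
                exact hA ⟨hc.1, hc.2⟩
              rw [this, mul_zero]
        have hR : (∑ s, AbT a s ⟨α, ⟨p, hpm⟩⟩ * t s ⟨α, ⟨q, hqm⟩⟩)
            = a α ⟨0, hm α⟩ * t ⟨α, ⟨p, hpm⟩⟩ ⟨α, ⟨q, hqm⟩⟩
              + a α ⟨1, by (try simp only [Fin.val_mk]) <;> omega⟩ * t ⟨α, ⟨p + 1, hp⟩⟩ ⟨α, ⟨q, hqm⟩⟩ := by
          rw [← Finset.sum_subset
            (Finset.subset_univ
              ({⟨α, ⟨p, hpm⟩⟩, ⟨α, ⟨p + 1, hp⟩⟩} : Finset (Idx r m))) ?_]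
          · rw [Finset.sum_pair (idx_mk_ne (by (try simp only [Fin.val_mk]) <;> omega))]
            congr 1
            · congr 1
              rw [AbT_same a α _ _ (le_refl _)]
              congr 1
              exact Fin.ext (by (try simp only [Fin.val_mk]) <;> omega)
            · congr 1
              rw [AbT_same a α _ _ (by (try simp only [Fin.val_mk]) <;> omega)]
              congr 1
              exact Fin.ext (by (try simp only [Fin.val_mk]) <;> omega)
          · rintro ⟨δ, ss⟩ _ hs
            by_cases hA : δ = α ∧ p ≤ ss.val
            · obtain ⟨h1, h2⟩ := hA
              subst h1
              have hne1 : ss.val ≠ p := fun h =>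
                hs (by rw [Finset.mem_insert]; left; exact idx_mk_eq h)
              have hne2 : ss.val ≠ p + 1 := fun h =>
                hs (by rw [Finset.mem_insert, Finset.mem_singleton]
                       right; exact idx_mk_eq h)
              rw [kill' _ _ (by (try simp only [Fin.val_mk]) <;> omega), mul_zero]
            · have : AbT a ⟨δ, ss⟩ ⟨α, ⟨p, hpm⟩⟩ = 0 := by
                unfold AbT
                rw [dif_neg]
                intro hc
                exact hA ⟨hc.1, hc.2⟩
              rw [this, zero_mul]
        rw [hL, hR] at he
        have h1m : (1 : ℕ) < m α := by (try simp only [Fin.val_mk]) <;> omega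
        have hcan : a α ⟨1, h1m⟩ *
            (t ⟨α, ⟨p, hpm⟩⟩ ⟨α, ⟨q + 1, hq⟩⟩ - t ⟨α, ⟨p + 1, hp⟩⟩ ⟨α, ⟨q, hqm⟩⟩) = 0 := by
          ring_nf
          ring_nf at he
          linarith
        rcases mul_eq_zero.mp hcan with h | h
        · exact absurd h (ha1 α h1m)
        · have := sub_eq_zero.mp h
          convert this using 3 <;> omega
      have walk : ∀ d : ℕ, ∀ p q : Fin (m α),
          p.val + q.val = jj.val + kk.val → d ≤ q.val → ∀ h2 : p.val + d < m α,
          t ⟨α, p⟩ ⟨α, q⟩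
            = t ⟨α, ⟨p.val + d, h2⟩⟩
                ⟨α, ⟨q.val - d, lt_of_le_of_lt (Nat.sub_le _ _) q.isLt⟩⟩ := by
        intro d
        induction d with
        | zero =>
          intro p q hsum hd h2
          congr 1 <;> exact idx_mk_eq (by (try simp only [Fin.val_mk]) <;> omega)
        | succ d ihd =>
          intro p q hsum hd h2
          rw [ihd p q hsum (by (try simp only [Fin.val_mk]) <;> omega) (by (try simp only [Fin.val_mk]) <;> omega)]
          have hstep := nbr (p.val + d) (q.val - (d + 1)) (by (try simp only [Fin.val_mk]) <;> omega)
            (by have := q.isLt; omega) (by (try simp only [Fin.val_mk]) <;> omega)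
          calc t ⟨α, ⟨p.val + d, by (try simp only [Fin.val_mk]) <;> omega⟩⟩ ⟨α, ⟨q.val - d, by
                  exact lt_of_le_of_lt (Nat.sub_le _ _) q.isLt⟩⟩
              = t ⟨α, ⟨p.val + d, by (try simp only [Fin.val_mk]) <;> omega⟩⟩ ⟨α, ⟨q.val - (d + 1) + 1, by
                  have := q.isLt; omega⟩⟩ := by
                congr 1 <;> exact idx_mk_eq (by (try simp only [Fin.val_mk]) <;> omega)
            _ = t ⟨α, ⟨p.val + d + 1, by (try simp only [Fin.val_mk]) <;> omega⟩⟩ ⟨α, ⟨q.val - (d + 1), by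
                  exact lt_of_le_of_lt (Nat.sub_le _ _) q.isLt⟩⟩ := hstep
            _ = t ⟨α, ⟨p.val + (d + 1), h2⟩⟩ ⟨α, ⟨q.val - (d + 1),
                  lt_of_le_of_lt (Nat.sub_le _ _) q.isLt⟩⟩ := by
                congr 1 <;> exact idx_mk_eq (by (try simp only [Fin.val_mk]) <;> omega)
      rcases le_or_gt jj.val kk.val with hle | hlt
      · have hw := walk (kk.val - jj.val) jj kk rfl (by (try simp only [Fin.val_mk]) <;> omega) (by have := kk.isLt; omega)
        have he : t ⟨α, ⟨jj.val + (kk.val - jj.val), by have := kk.isLt; omega⟩⟩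
            ⟨α, ⟨kk.val - (kk.val - jj.val), lt_of_le_of_lt (Nat.sub_le _ _) kk.isLt⟩⟩
            = t ⟨α, kk⟩ ⟨α, jj⟩ := by
          congr 1
          · exact idx_mk_eq (by (try simp only [Fin.val_mk]) <;> omega)
          · exact idx_mk_eq (by (try simp only [Fin.val_mk]) <;> omega)
        rw [he] at hw
        have h2 := hanti ⟨α, jj⟩ ⟨α, kk⟩
        linarith
      · have hw := walk (jj.val - kk.val) kk jj (by (try simp only [Fin.val_mk]) <;> omega) (by (try simp only [Fin.val_mk]) <;> omega)
          (by have := jj.isLt; omega)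
        have he : t ⟨α, ⟨kk.val + (jj.val - kk.val), by have := jj.isLt; omega⟩⟩
            ⟨α, ⟨jj.val - (jj.val - kk.val), lt_of_le_of_lt (Nat.sub_le _ _) jj.isLt⟩⟩
            = t ⟨α, jj⟩ ⟨α, kk⟩ := by
          congr 1
          · exact idx_mk_eq (by (try simp only [Fin.val_mk]) <;> omega)
          · exact idx_mk_eq (by (try simp only [Fin.val_mk]) <;> omega)
        rw [he] at hw
        have h2 := hanti ⟨α, jj⟩ ⟨α, kk⟩
        linarith
    · -- different blocks
      have he := heq j k
      have hL : (∑ s, t j s * AbT a s k) = t j k * a k.1 ⟨0, hm k.1⟩ := by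
        rw [Finset.sum_eq_single k]
        · congr 1
          unfold AbT
          rw [dif_pos ⟨rfl, le_refl _⟩]
          congr 1
          exact Fin.ext (by (try simp only [Fin.val_mk]) <;> omega)
        · rintro ⟨δ, ss⟩ _ hs
          by_cases hA : δ = k.1 ∧ k.2.val ≤ ss.val
          · obtain ⟨h1, h2⟩ := hA
            subst h1
            have hlt : k.2.val < ss.val := by
              rcases Nat.lt_or_ge k.2.val ss.val with h' | h'
              · exact h'
              · exact absurd (idx_ext rfl (by (try simp only [Fin.val_mk]) <;> omega) : (⟨k.1, ss⟩ : Idx r m) = k)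
                  hs
            have hz : t j ⟨k.1, ss⟩ = 0 := by
              apply kill
              have h3 := ss.isLt; have h4 := k.2.isLt
              dsimp only
              omega
            rw [hz, zero_mul]
          · have : AbT a ⟨δ, ss⟩ k = 0 := by
              unfold AbT
              rw [dif_neg]
              intro hc
              exact hA ⟨hc.1, hc.2⟩
            rw [this, mul_zero]
        · intro h; exact absurd (Finset.mem_univ _) h
      have hR : (∑ s, AbT a s j * t s k) = a j.1 ⟨0, hm j.1⟩ * t j k := by
        rw [Finset.sum_eq_single j]
        · congr 1
          unfold AbT
          rw [dif_pos ⟨rfl, le_refl _⟩]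
          congr 1
          exact Fin.ext (by (try simp only [Fin.val_mk]) <;> omega)
        · rintro ⟨δ, ss⟩ _ hs
          by_cases hA : δ = j.1 ∧ j.2.val ≤ ss.val
          · obtain ⟨h1, h2⟩ := hA
            subst h1
            have hlt : j.2.val < ss.val := by
              rcases Nat.lt_or_ge j.2.val ss.val with h' | h'
              · exact h'
              · exact absurd (idx_ext rfl (by (try simp only [Fin.val_mk]) <;> omega) : (⟨j.1, ss⟩ : Idx r m) = j)
                  hs
            have hz : t ⟨j.1, ss⟩ k = 0 := by
              apply kill
              have h3 := ss.isLt; have h4 := j.2.isLt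
              dsimp only
              omega
            rw [hz, mul_zero]
          · have : AbT a ⟨δ, ss⟩ j = 0 := by
              unfold AbT
              rw [dif_neg]
              intro hc
              exact hA ⟨hc.1, hc.2⟩
            rw [this, zero_mul]
        · intro h; exact absurd (Finset.mem_univ _) h
      rw [hL, hR] at he
      have hne : a k.1 ⟨0, hm k.1⟩ - a j.1 ⟨0, hm j.1⟩ ≠ 0 :=
        sub_ne_zero.mpr (ha0 k.1 j.1 (fun h => hbg h.symm))
      have : t j k * (a k.1 ⟨0, hm k.1⟩ - a j.1 ⟨0, hm j.1⟩) = 0 := by ring_nf; linarith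
      rcases mul_eq_zero.mp this with h | h
      · exact h
      · exact absurd h hne

/-- If `A = X∘` and `B = Y∘` satisfy `d_∇A = 0` and
`(d_∇B)^i_{js} A^s_m + (d_∇B)^i_{ms} A^s_j = 0`, with `X^{1(α)} ≠ X^{1(β)}` for
`α ≠ β` and `X^{2(α)} ≠ 0`, then `d_∇B = 0`. -/
theorem stmt5 {r : ℕ} {m : Fin r → ℕ} (hm : ∀ α, 1 ≤ m α)
    (U : Set (Idx r m → ℝ)) (hU : IsOpen U)
    (Γ : Idx r m → Idx r m → Idx r m → (Idx r m → ℝ) → ℝ)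
    (hΓ : ∀ i j k, ContDiffOn ℝ (⊤ : ℕ∞) (Γ i j k) U)
    (htor : ∀ i j k, ∀ x ∈ U, Γ i j k x = Γ i k j x)
    (X Y : Idx r m → (Idx r m → ℝ) → ℝ)
    (hX : ∀ i, ContDiffOn ℝ (⊤ : ℕ∞) (X i) U)
    (hY : ∀ i, ContDiffOn ℝ (⊤ : ℕ∞) (Y i) U)
    (hdA : ∀ i j k, ∀ x ∈ U, covT Γ (Xc X) j i k x = covT Γ (Xc X) k i j x)
    (hAB : ∀ i j l, ∀ x ∈ U,
      (∑ s, (covT Γ (Xc Y) j i s x - covT Γ (Xc Y) s i j x) * Xc X s l x)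
        + (∑ s, (covT Γ (Xc Y) l i s x - covT Γ (Xc Y) s i l x) * Xc X s j x) = 0)
    (hX1 : ∀ x ∈ U, ∀ α β : Fin r, α ≠ β →
      X ⟨α, ⟨0, hm α⟩⟩ x ≠ X ⟨β, ⟨0, hm β⟩⟩ x)
    (hX2 : ∀ x ∈ U, ∀ α : Fin r, ∀ hα : 1 < m α, X ⟨α, ⟨1, hα⟩⟩ x ≠ 0) :
    ∀ i j k, ∀ x ∈ U, covT Γ (Xc Y) j i k x = covT Γ (Xc Y) k i j x := by
  intro i j k x hx
  have main := key hm (fun α p => X ⟨α, p⟩ x)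
    (fun p q => covT Γ (Xc Y) p i q x - covT Γ (Xc Y) q i p x) ?_ ?_ ?_ ?_ j k
  · try dsimp only at main
    linarith
  · intro p q
    try dsimp only
    ring
  · intro j' l'
    have h1 := hAB i j' l' x hx
    simp only [Xc_eq] at h1
    try dsimp only
    have h2 : (∑ s, AbT (fun α p => X ⟨α, p⟩ x) s j'
          * (covT Γ (Xc Y) s i l' x - covT Γ (Xc Y) l' i s x))
        = - ∑ s, (covT Γ (Xc Y) l' i s x - covT Γ (Xc Y) s i l' x)
          * AbT (fun α p => X ⟨α, p⟩ x) s j' := by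
      rw [← Finset.sum_neg_distrib]
      apply Finset.sum_congr rfl
      intros
      ring
    rw [h2]
    linarith
  · intro α β hne
    try dsimp only
    exact hX1 x hx α β hne
  · intro α h
    try dsimp only
    exact hX2 x hx α h
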